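/- arXiv:2307.12468 — 4 statements merged into one kernel-verified Lean document; each statement's English description precedes it below -/
import Mathlib

section
/- For any x ∈ [-1,1] and Ψ ∈ ℝ^{d+1}, Re[⟨0|U(x,Ψ)|0⟩] = Im[⟨0| e^{i(π/4)Z} U(x,Ψ) e^{i(π/4)Z} |0⟩], where ⟨0|M|0⟩ denotes the (1,1) entry of the matrix M. -/
open Matrix Complex

/-- `e^{iψZ}` where `Z` is the Pauli-Z matrix. -/
noncomputable def Rz (ψ : ℝ) : Matrix (Fin 2) (Fin 2) ℂ :=
  !![Complex.exp (Complex.I * ψ), 0; 0, Complex.exp (-(Complex.I * ψ))]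

/-- `W(x) = e^{i arccos(x) X}` where `X` is the Pauli-X matrix. -/
noncomputable def Wm (x : ℝ) : Matrix (Fin 2) (Fin 2) ℂ :=
  !![(x : ℂ), Complex.I * Real.sqrt (1 - x ^ 2);
     Complex.I * Real.sqrt (1 - x ^ 2), (x : ℂ)]

/-- The QSP unitary `U(x,Ψ) = e^{iψ₀Z} ∏_{j=1}^d (W(x) e^{iψ_jZ})`. -/
noncomputable def Um (d : ℕ) (x : ℝ) (Ψ : ℕ → ℝ) : Matrix (Fin 2) (Fin 2) ℂ :=
  Rz (Ψ 0) * ((List.range d).map (fun j => Wm x * Rz (Ψ (j + 1)))).prod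

theorem qsp_re_im_equiv (d : ℕ) (x : ℝ) (hx : x ∈ Set.Icc (-1 : ℝ) 1) (Ψ : ℕ → ℝ) :
    (Um d x Ψ 0 0).re = ((Rz (Real.pi / 4) * Um d x Ψ * Rz (Real.pi / 4)) 0 0).im := by
  have h : (Rz (Real.pi / 4) * Um d x Ψ * Rz (Real.pi / 4)) 0 0
      = Complex.I * Um d x Ψ 0 0 := by
    simp [Rz, Matrix.mul_apply, Matrix.vecMul, dotProduct, Fin.sum_univ_two]
    rw [mul_right_comm, ← Complex.exp_add]
    have h1 : Complex.I * ((Real.pi : ℂ) / 4) + Complex.I * ((Real.pi : ℂ) / 4)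
        = (Real.pi / 2 : ℝ) * Complex.I := by push_cast; ring
    rw [h1, Complex.exp_mul_I]
    simp
  rw [h]
  simp
end

section
/- If Ψ ∈ ℝ^{d+1} is symmetric, i.e., ψ_i = ψ_{d-i} for all i, then the matrix U(x,Ψ) is a symmetric matrix: U(x,Ψ) = U(x,Ψ)ᵀ for every x ∈ [-1,1]. -/
open Matrix Complex

lemma Rz_transpose (ψ : ℝ) : (Rz ψ)ᵀ = Rz ψ := by
  ext i j
  fin_cases i <;> fin_cases j <;> simp [Rz, Matrix.transpose_apply]

lemma Wm_transpose (x : ℝ) : (Wm x)ᵀ = Wm x := by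
  ext i j
  fin_cases i <;> fin_cases j <;> simp [Wm]

/-- The alternating word `[Rz ψ₀, W, Rz ψ₁, W, …, W, Rz ψ_d]`, built by prepending. -/
noncomputable def seqL (x : ℝ) : ℕ → (ℕ → ℝ) → List (Matrix (Fin 2) (Fin 2) ℂ)
  | 0, Ψ => [Rz (Ψ 0)]
  | d + 1, Ψ => Rz (Ψ 0) :: Wm x :: seqL x d (fun i => Ψ (i + 1))

lemma seqL_congr (x : ℝ) (d : ℕ) (Ψ Ψ' : ℕ → ℝ) (h : ∀ i ≤ d, Ψ i = Ψ' i) :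
    seqL x d Ψ = seqL x d Ψ' := by
  induction d generalizing Ψ Ψ' with
  | zero => simp [seqL, h 0 le_rfl]
  | succ d ih =>
      simp only [seqL, h 0 (Nat.zero_le _)]
      rw [ih _ _ (fun i hi => h (i + 1) (by omega))]

lemma seqL_snoc (x : ℝ) (d : ℕ) (Ψ : ℕ → ℝ) :
    seqL x (d + 1) Ψ = seqL x d Ψ ++ [Wm x, Rz (Ψ (d + 1))] := by
  induction d generalizing Ψ with
  | zero => simp [seqL]
  | succ d ih =>
      show Rz (Ψ 0) :: Wm x :: seqL x (d + 1) (fun i => Ψ (i + 1)) = _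
      rw [ih]
      simp [seqL]

lemma seqL_reverse (x : ℝ) (d : ℕ) (Ψ : ℕ → ℝ) :
    (seqL x d Ψ).reverse = seqL x d (fun i => Ψ (d - i)) := by
  induction d generalizing Ψ with
  | zero => simp [seqL]
  | succ d ih =>
      show (Rz (Ψ 0) :: Wm x :: seqL x d (fun i => Ψ (i + 1))).reverse = _
      rw [List.reverse_cons, List.reverse_cons, ih, seqL_snoc]
      have h1 : seqL x d (fun i => (fun i => Ψ (i + 1)) (d - i))
          = seqL x d (fun i => Ψ (d + 1 - i)) :=
        seqL_congr x d _ _ (fun i hi => by simp only []; congr 1; omega)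
      have h2 : Ψ (d + 1 - (d + 1)) = Ψ 0 := by norm_num
      simp [seqL, h1, h2]

lemma seqL_map_transpose (x : ℝ) (d : ℕ) (Ψ : ℕ → ℝ) :
    (seqL x d Ψ).map Matrix.transpose = seqL x d Ψ := by
  induction d generalizing Ψ with
  | zero => simp [seqL, Rz_transpose]
  | succ d ih =>
      show (Rz (Ψ 0) :: Wm x :: seqL x d (fun i => Ψ (i + 1))).map _ = _
      simp [Rz_transpose, Wm_transpose, ih, seqL]

lemma Um_eq_prod (d : ℕ) (x : ℝ) (Ψ : ℕ → ℝ) : Um d x Ψ = (seqL x d Ψ).prod := by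
  induction d generalizing Ψ with
  | zero => simp [Um, seqL]
  | succ d ih =>
      have : Um (d + 1) x Ψ = Um d x Ψ * (Wm x * Rz (Ψ (d + 1))) := by
        simp [Um, List.range_succ, mul_assoc]
      rw [this, ih, seqL_snoc]
      simp [mul_assoc]

theorem qsp_symmetric_matrix (d : ℕ) (x : ℝ) (hx : x ∈ Set.Icc (-1 : ℝ) 1) (Ψ : ℕ → ℝ)
    (hsym : ∀ i ≤ d, Ψ i = Ψ (d - i)) :
    Um d x Ψ = (Um d x Ψ)ᵀ := by
  rw [Um_eq_prod, Matrix.transpose_list_prod, seqL_map_transpose, seqL_reverse]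
  exact congrArg List.prod (seqL_congr x d Ψ _ hsym)
end

section
/- For Ψ = (ψ₀,...,ψ_d) ∈ ℝ^{d+1} and x = cos θ ∈ [-1,1], the entry ⟨0|U(x,Ψ)|0⟩ is a polynomial in x of degree at most d with parity d mod 2 (i.e., it is an even polynomial if d is even and an odd polynomial if d is odd). -/
open Matrix Complex

open Matrix Complex Polynomial

lemma qsp_key (Ψ : ℕ → ℝ) (d : ℕ) :
    ∃ A B : Polynomial ℂ,
      A.natDegree ≤ d ∧ (B = 0 ∨ B.natDegree < d) ∧
      (∀ y : ℂ, A.eval (-y) = (-1 : ℂ) ^ d * A.eval y) ∧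
      (∀ y : ℂ, B.eval (-y) = (-1 : ℂ) ^ (d + 1) * B.eval y) ∧
      ∀ x : ℝ, x ∈ Set.Icc (-1 : ℝ) 1 →
        ((List.range d).map (fun j => Wm x * Rz (Ψ (j + 1)))).prod 0 0 = A.eval (x : ℂ) ∧
        ((List.range d).map (fun j => Wm x * Rz (Ψ (j + 1)))).prod 0 1
          = Complex.I * (Real.sqrt (1 - x ^ 2) : ℂ) * B.eval (x : ℂ) := by
  induction d with
  | zero =>
      refine ⟨1, 0, by simp, Or.inl rfl, by simp, by simp, ?_⟩
      intro x hx
      simp [Matrix.one_apply]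
  | succ d ih =>
      obtain ⟨A, B, hA, hB, hApar, hBpar, hM⟩ := ih
      set ep : ℂ := Complex.exp (Complex.I * (Ψ (d + 1) : ℝ)) with hep
      set em : ℂ := Complex.exp (-(Complex.I * (Ψ (d + 1) : ℝ))) with hem
      refine ⟨C ep * (X * A - (1 - X ^ 2) * B), C em * (A + X * B), ?_, ?_, ?_, ?_, ?_⟩
      · refine le_trans (natDegree_C_mul_le _ _) ?_
        refine le_trans (natDegree_sub_le _ _) (max_le ?_ ?_)
        · refine le_trans (natDegree_mul_le) ?_
          have hX : (X : Polynomial ℂ).natDegree ≤ 1 := natDegree_X_le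
          omega
        · rcases hB with rfl | hB
          · simp
          · refine le_trans (natDegree_mul_le) ?_
            have h2 : (1 - X ^ 2 : Polynomial ℂ).natDegree ≤ 2 :=
              le_trans (natDegree_sub_le _ _) (by simp)
            omega
      · right
        refine lt_of_le_of_lt (natDegree_C_mul_le _ _) (lt_of_le_of_lt ?_ (Nat.lt_succ_self d))
        refine le_trans (natDegree_add_le _ _) (max_le hA ?_)
        rcases hB with rfl | hB
        · simp
        · refine le_trans (natDegree_mul_le) ?_
          have hX : (X : Polynomial ℂ).natDegree ≤ 1 := natDegree_X_le
          omega
      · intro y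
        simp only [eval_mul, eval_sub, eval_add, eval_pow, eval_X, eval_C, eval_one,
          hApar y, hBpar y, pow_succ]
        ring
      · intro y
        simp only [eval_mul, eval_sub, eval_add, eval_pow, eval_X, eval_C, eval_one,
          hApar y, hBpar y, pow_succ]
        ring
      · intro x hx
        obtain ⟨hM00, hM01⟩ := hM x hx
        have h1x : (0 : ℝ) ≤ 1 - x ^ 2 := by nlinarith [hx.1, hx.2]
        have hs : ((Real.sqrt (1 - x ^ 2) : ℝ) : ℂ) * ((Real.sqrt (1 - x ^ 2) : ℝ) : ℂ)
            = 1 - (x : ℂ) ^ 2 := by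
          rw [← Complex.ofReal_mul, Real.mul_self_sqrt h1x]
          push_cast; ring
        have hI : Complex.I * Complex.I = -1 := Complex.I_mul_I
        have hlist : ((List.range (d + 1)).map (fun j => Wm x * Rz (Ψ (j + 1)))).prod
            = ((List.range d).map (fun j => Wm x * Rz (Ψ (j + 1)))).prod
              * (Wm x * Rz (Ψ (d + 1))) := by
          rw [List.range_succ, List.map_append, List.prod_append]
          simp
        have hN : Wm x * Rz (Ψ (d + 1)) =
            !![(x : ℂ) * ep, Complex.I * (Real.sqrt (1 - x ^ 2) : ℂ) * em;
               Complex.I * (Real.sqrt (1 - x ^ 2) : ℂ) * ep, (x : ℂ) * em] := by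
          rw [Wm, Rz]
          ext i j
          fin_cases i <;> fin_cases j <;>
            simp [Matrix.mul_apply, Fin.sum_univ_two, hep, hem]
        constructor
        · rw [hlist, hN, Matrix.mul_apply, Fin.sum_univ_two]
          simp only [hM00, hM01, Matrix.of_apply, Matrix.cons_val', Matrix.cons_val_zero, Matrix.cons_val_one,
            Matrix.head_cons, Matrix.head_fin_const, Matrix.empty_val',
            Matrix.cons_val_fin_one, eval_mul, eval_sub, eval_add, eval_pow, eval_X, eval_C,
            eval_one]
          linear_combination (ep * B.eval (x : ℂ) * (((Real.sqrt (1 - x ^ 2) : ℝ) : ℂ)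
            * ((Real.sqrt (1 - x ^ 2) : ℝ) : ℂ))) * hI - (ep * B.eval (x : ℂ)) * hs
        · rw [hlist, hN, Matrix.mul_apply, Fin.sum_univ_two]
          simp only [hM00, hM01, Matrix.of_apply, Matrix.cons_val', Matrix.cons_val_zero, Matrix.cons_val_one,
            Matrix.head_cons, Matrix.head_fin_const, Matrix.empty_val',
            Matrix.cons_val_fin_one, eval_mul, eval_sub, eval_add, eval_pow, eval_X, eval_C,
            eval_one]
          ring

theorem qsp_entry_polynomial (d : ℕ) (Ψ : ℕ → ℝ) :
    ∃ P : Polynomial ℂ, P.natDegree ≤ d ∧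
      (∀ y : ℂ, P.eval (-y) = (-1 : ℂ) ^ d * P.eval y) ∧
      ∀ x ∈ Set.Icc (-1 : ℝ) 1, Um d x Ψ 0 0 = P.eval (x : ℂ) := by
  obtain ⟨A, B, hA, hB, hApar, hBpar, hM⟩ := qsp_key Ψ d
  refine ⟨Polynomial.C (Complex.exp (Complex.I * (Ψ 0 : ℝ))) * A,
    le_trans (Polynomial.natDegree_C_mul_le _ _) hA, ?_, ?_⟩
  · intro y
    simp only [Polynomial.eval_mul, Polynomial.eval_C, hApar y]
    ring
  · intro x hx
    obtain ⟨hM00, hM01⟩ := hM x hx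
    rw [Um, Matrix.mul_apply, Fin.sum_univ_two, hM00]
    have h10 : ((List.range d).map (fun j => Wm x * Rz (Ψ (j + 1)))).prod 1 0
        = ((List.range d).map (fun j => Wm x * Rz (Ψ (j + 1)))).prod 1 0 := rfl
    simp [Rz, Polynomial.eval_mul, Polynomial.eval_C]
end

section
/- Real-arithmetic recurrence for symmetric QSP: suppose U = [[a + i·d, iα],[iα, a - i·d]] with a, d, α real and a² + d² + α² = 1 (so U ∈ SU(2) with purely imaginary off-diagonal entries). Then for any φ ∈ ℝ and x ∈ [-1,1], the matrix U' = e^{iφZ} W(x) U W(x) e^{iφZ} has the same form U' = [[a' + i·d', iα'],[iα', a' - i·d']] with real a', d', α', and (a', d', α')ᵀ = R_z(2φ) R_x(2 arccos x) (a, d, α)ᵀ. -/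
open Matrix Complex

/-- The symmetric-QSP matrix form `[[a+i d, iα],[iα, a-i d]]`. -/
noncomputable def QSPv (a d α : ℝ) : Matrix (Fin 2) (Fin 2) ℂ :=
  !![(a : ℂ) + Complex.I * d, Complex.I * α; Complex.I * α, (a : ℂ) - Complex.I * d]

/-- The 3×3 rotation `R_z(t)` about the z-axis. -/
noncomputable def Rz3 (t : ℝ) : Matrix (Fin 3) (Fin 3) ℝ :=
  !![Real.cos t, -Real.sin t, 0; Real.sin t, Real.cos t, 0; 0, 0, 1]

/-- The 3×3 rotation `R_x(t)` about the x-axis (QSP convention). -/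
noncomputable def Rx3 (t : ℝ) : Matrix (Fin 3) (Fin 3) ℝ :=
  !![Real.cos t, 0, -Real.sin t; 0, 1, 0; Real.sin t, 0, Real.cos t]

set_option maxHeartbeats 2000000 in
theorem qsp_real_recurrence (a dd α : ℝ) (hnorm : a ^ 2 + dd ^ 2 + α ^ 2 = 1)
    (φ x : ℝ) (hx : x ∈ Set.Icc (-1 : ℝ) 1) :
    ∃ a' dd' α' : ℝ,
      Rz φ * Wm x * QSPv a dd α * Wm x * Rz φ = QSPv a' dd' α' ∧
      ![a', dd', α'] = (Rz3 (2 * φ) * Rx3 (2 * Real.arccos x)) *ᵥ ![a, dd, α] := by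
  obtain ⟨hx1, hx2⟩ := hx
  have h1x : (0:ℝ) ≤ 1 - x ^ 2 := by nlinarith
  have hs : Real.sqrt (1 - x ^ 2) ^ 2 = 1 - x ^ 2 := Real.sq_sqrt h1x
  have hcosa : Real.cos (Real.arccos x) = x := Real.cos_arccos hx1 hx2
  have hsina : Real.sin (Real.arccos x) = Real.sqrt (1 - x ^ 2) := Real.sin_arccos x
  have hpy : Real.sin φ ^ 2 + Real.cos φ ^ 2 = 1 := Real.sin_sq_add_cos_sq φ
  have hc2 : Real.cos (2 * Real.arccos x) = x ^ 2 - Real.sqrt (1 - x ^ 2) ^ 2 := by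
    rw [Real.cos_two_mul, hcosa, hs]; ring
  have hs2 : Real.sin (2 * Real.arccos x) = 2 * Real.sqrt (1 - x ^ 2) * x := by
    rw [Real.sin_two_mul, hsina, hcosa]
  have hrc : Real.cos (2 * φ) = Real.cos φ ^ 2 - Real.sin φ ^ 2 := by
    rw [Real.cos_two_mul]; linarith
  have hrs : Real.sin (2 * φ) = 2 * Real.sin φ * Real.cos φ := Real.sin_two_mul φ
  have hE : Complex.exp (Complex.I * φ) = (Real.cos φ : ℂ) + (Real.sin φ : ℂ) * Complex.I := by
    rw [mul_comm, Complex.exp_mul_I, Complex.ofReal_cos, Complex.ofReal_sin]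
  have hF : Complex.exp (-(Complex.I * φ)) = (Real.cos φ : ℂ) - (Real.sin φ : ℂ) * Complex.I := by
    rw [show -(Complex.I * (φ:ℂ)) = ((-φ : ℝ) : ℂ) * Complex.I by push_cast; ring,
      Complex.exp_mul_I]
    rw [Complex.ofReal_neg, Complex.cos_neg, Complex.sin_neg, Complex.ofReal_cos,
      Complex.ofReal_sin]
    ring
  have hpyC : Complex.sin φ ^ 2 + Complex.cos φ ^ 2 = 1 := Complex.sin_sq_add_cos_sq φ
  have hI2 : Complex.I ^ 2 = -1 := Complex.I_sq
  have hI3 : Complex.I ^ 3 = -Complex.I := by simp [pow_succ]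
  have hI4 : Complex.I ^ 4 = 1 := by simp [pow_succ]
  have hI5 : Complex.I ^ 5 = Complex.I := by simp [pow_succ]
  have hI6 : Complex.I ^ 6 = -1 := by simp [pow_succ]
  refine ⟨Real.cos (2 * φ) * (a * (x ^ 2 - Real.sqrt (1 - x ^ 2) ^ 2)
            - 2 * x * Real.sqrt (1 - x ^ 2) * α) - Real.sin (2 * φ) * dd,
          Real.sin (2 * φ) * (a * (x ^ 2 - Real.sqrt (1 - x ^ 2) ^ 2)
            - 2 * x * Real.sqrt (1 - x ^ 2) * α) + Real.cos (2 * φ) * dd,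
          2 * x * Real.sqrt (1 - x ^ 2) * a + (x ^ 2 - Real.sqrt (1 - x ^ 2) ^ 2) * α,
          ?_, ?_⟩
  have hsC : ((Real.sqrt (1 - x ^ 2) : ℝ) : ℂ) ^ 2 = 1 - (x : ℂ) ^ 2 := by exact_mod_cast hs
  · simp only [Rz, Wm, QSPv, hE, hF, Matrix.mul_fin_two]
    rw [hrc, hrs]
    ext i j
    fin_cases i <;> fin_cases j <;>
      simp only [Fin.zero_eta, Fin.mk_one, Matrix.cons_val', Matrix.cons_val_zero,
        Matrix.cons_val_one, Matrix.head_cons, Matrix.empty_val', Matrix.cons_val_fin_one,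
        Matrix.head_fin_const, Fin.isValue, Matrix.of_apply] <;>
      push_cast <;> ring_nf <;>
      simp only [hI2, hI3, hI4, hI5, hI6]
    · linear_combination ((Complex.I * (Complex.cos φ ^ 2 - Complex.sin φ ^ 2) -
        2 * Complex.cos φ * Complex.sin φ) * (dd : ℂ)) * hsC
    · linear_combination (Complex.I * (2 * (x:ℂ) * (Real.sqrt (1 - x ^ 2) : ℂ) * a +
        ((x:ℂ) ^ 2 - (Real.sqrt (1 - x ^ 2) : ℂ) ^ 2) * α)) * hpyC
    · linear_combination (Complex.I * (2 * (x:ℂ) * (Real.sqrt (1 - x ^ 2) : ℂ) * a +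
        ((x:ℂ) ^ 2 - (Real.sqrt (1 - x ^ 2) : ℂ) ^ 2) * α)) * hpyC
    · linear_combination (-(Complex.I * (Complex.cos φ ^ 2 - Complex.sin φ ^ 2) +
        2 * Complex.cos φ * Complex.sin φ) * (dd : ℂ)) * hsC
  · funext i
    fin_cases i <;>
      · simp only [Rz3, Rx3, Matrix.mulVec, Matrix.mul_apply, dotProduct,
          Fin.sum_univ_succ, Fin.sum_univ_zero, Fin.zero_eta, Fin.mk_one, Matrix.cons_val',
          Matrix.cons_val_zero, Matrix.cons_val_one, Matrix.head_cons, Matrix.empty_val',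
          Matrix.cons_val_fin_one, Matrix.head_fin_const, Fin.isValue, Matrix.of_apply,
          Matrix.cons_val_two, Matrix.tail_cons, Matrix.cons_val_succ, Fin.reduceFinMk]
        rw [hc2, hs2]
        ring
end
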